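/- For every real q > 4 and γ = q^((q−1)/2), if Z, Z' are i.i.d. Poisson random variables with parameter γ^(1/(q−1))/2 = √q/2, then γ^(−q/(q−1)) E[|Z − Z'|^q] ≤ (2√(2e) · √q)^q. -/

import Mathlib

open MeasureTheory ProbabilityTheory Real NNReal

/-! Since `γ ^ (-q/(q-1)) = q ^ (-q/2)`, it suffices to show `E|Z - Z'|^q ≤ q^q`.
Bound `|m - n|^q ≤ (m + n)^q ≤ (q/e)^q e^(m+n)` and use the exponential moment
`E e^Z = exp (λ(e - 1))` of the Poisson law: with `2λ = √q ≤ q/(e-1)` this gives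
`E|Z - Z'|^q ≤ (q/e)^q e^q = q^q`, so the left side is at most `√q ^ q`. -/

lemma rpow_le_div_exp_one_rpow_mul_exp {q x : ℝ} (hq : 0 < q) (hx : 0 ≤ x) :
    x ^ q ≤ (q / exp 1) ^ q * exp x := by
  have hlin : x / q ≤ exp (x / q - 1) := by linarith [add_one_le_exp (x / q - 1)]
  calc x ^ q = q ^ q * (x / q) ^ q := by
        rw [← mul_rpow hq.le (by positivity), mul_div_cancel₀ _ hq.ne']
    _ ≤ q ^ q * exp (x / q - 1) ^ q := by gcongr
    _ = (q / exp 1) ^ q * exp x := by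
        rw [← exp_mul, div_rpow hq.le (exp_pos 1).le, exp_one_rpow, sub_mul,
          div_mul_cancel₀ _ hq.ne', one_mul, exp_sub]
        ring

lemma lintegral_exp_mul_poissonMeasure (r : ℝ≥0) (t : ℝ) :
    ∫⁻ n, ENNReal.ofReal (exp (t * n)) ∂poissonMeasure r =
      ENNReal.ofReal (exp (r * (exp t - 1))) := by
  have hseries : HasSum (fun n : ℕ ↦ exp (-r) * r ^ n / n.factorial * exp (t * n))
      (exp (r * (exp t - 1))) := by
    have hterm (n : ℕ) : exp (-r) * r ^ n / n.factorial * exp (t * n) =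
        exp (-r) * ((r * exp t) ^ n / n.factorial) := by
      rw [mul_comm t, exp_nat_mul, mul_pow]
      ring
    have hsum : exp (r * (exp t - 1)) = exp (-r) * exp (r * exp t) := by
      rw [← exp_add]; ring_nf
    have h := (NormedSpace.expSeries_div_hasSum_exp ((r : ℝ) * exp t)).mul_left (exp (-r))
    rw [← exp_eq_exp_ℝ] at h
    rwa [funext hterm, hsum]
  rw [poissonMeasure, lintegral_sum_measure]
  simp only [lintegral_smul_measure, lintegral_dirac, smul_eq_mul,
    ← ENNReal.ofReal_mul' (exp_nonneg _)]
  rw [← ENNReal.ofReal_tsum_of_nonneg (fun n ↦ by positivity) hseries.summable,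
    hseries.tsum_eq]

lemma integral_abs_sub_rpow_prod_poissonMeasure_le (r s : ℝ≥0) {q : ℝ} (hq : 0 < q) :
    ∫ p : ℕ × ℕ, |(p.1 : ℝ) - p.2| ^ q ∂(poissonMeasure r).prod (poissonMeasure s) ≤
      (q / exp 1) ^ q * exp ((r + s) * (exp 1 - 1)) := by
  set C := (q / exp 1) ^ q
  have hpointwise (m n : ℕ) : |(m : ℝ) - n| ^ q ≤ C * (exp m * exp n) := by
    have habs : |(m : ℝ) - n| ≤ m + n := (abs_sub _ _).trans_eq (by simp)
    calc |(m : ℝ) - n| ^ q ≤ ((m : ℝ) + n) ^ q := by gcongr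
      _ ≤ C * exp (m + n) := rpow_le_div_exp_one_rpow_mul_exp hq (by positivity)
      _ = C * (exp m * exp n) := by rw [exp_add]
  have hmoment (u : ℝ≥0) : ∫⁻ n, ENNReal.ofReal (exp n) ∂poissonMeasure u =
      ENNReal.ofReal (exp (u * (exp 1 - 1))) := by
    simpa using lintegral_exp_mul_poissonMeasure u 1
  have hlintegral : ∫⁻ p : ℕ × ℕ, ENNReal.ofReal (|(p.1 : ℝ) - p.2| ^ q)
      ∂(poissonMeasure r).prod (poissonMeasure s) ≤
        ENNReal.ofReal (C * (exp (r * (exp 1 - 1)) * exp (s * (exp 1 - 1)))) := by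
    calc _ ≤ ∫⁻ p : ℕ × ℕ, ENNReal.ofReal C * (ENNReal.ofReal (exp p.1) *
            ENNReal.ofReal (exp p.2)) ∂(poissonMeasure r).prod (poissonMeasure s) := by
          refine lintegral_mono fun p ↦ ?_
          rw [← ENNReal.ofReal_mul (exp_nonneg _), ← ENNReal.ofReal_mul (by positivity)]
          exact ENNReal.ofReal_le_ofReal (hpointwise p.1 p.2)
      _ = _ := by
          rw [lintegral_const_mul _ (by fun_prop),
            lintegral_prod_mul (f := fun m : ℕ ↦ ENNReal.ofReal (exp m))
              (g := fun n : ℕ ↦ ENNReal.ofReal (exp n)) (by fun_prop) (by fun_prop),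
            hmoment, hmoment,
            ← ENNReal.ofReal_mul (exp_nonneg _), ← ENNReal.ofReal_mul (by positivity)]
  rw [integral_eq_lintegral_of_nonneg_ae (.of_forall fun p ↦ by positivity) .of_discrete]
  refine (ENNReal.toReal_le_of_le_ofReal (by positivity) hlintegral).trans_eq ?_
  rw [add_mul, exp_add]

/-- Bound on the optimal Rosenthal constant for `q > 4` at `γ = q^((q−1)/2)`:
if `Z, Z'` are i.i.d. Poisson with parameter `γ^(1/(q−1))/2 = √q/2`, then
`γ^(−q/(q−1)) E[|Z − Z'|^q] ≤ (2√(2e) √q)^q`. -/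
theorem rosenthal_constant_bound (q : ℝ) (hq : 4 < q) :
    (q ^ ((q - 1) / 2)) ^ (-(q / (q - 1))) *
        ∫ p : ℕ × ℕ, |(p.1 : ℝ) - (p.2 : ℝ)| ^ q
          ∂((poissonMeasure (Real.toNNReal (Real.sqrt q / 2))).prod
            (poissonMeasure (Real.toNNReal (Real.sqrt q / 2)))) ≤
      (2 * Real.sqrt (2 * Real.exp 1) * Real.sqrt q) ^ q := by
  have hq0 : 0 < q := by linarith
  set r := Real.toNNReal (√q / 2)
  have hr : (r : ℝ) + r = √q := by rw [Real.coe_toNNReal _ (by positivity)]; ring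
  have hprefactor : (q ^ ((q - 1) / 2)) ^ (-(q / (q - 1))) = q ^ (-(q / 2)) := by
    rw [← rpow_mul hq0.le]
    congr 1
    field_simp [show q - 1 ≠ 0 by linarith]
  have hexponent : (r + r : ℝ) * (exp 1 - 1) ≤ q := by
    have hsqrt : 2 ≤ √q := by rw [show (2 : ℝ) = √4 by norm_num]; gcongr
    rw [hr]
    nlinarith [sq_sqrt hq0.le, exp_one_lt_d9]
  have hmain : q ^ (-(q / 2)) * ((q / exp 1) ^ q * exp q) = √q ^ q := by
    rw [div_rpow hq0.le (exp_pos 1).le, exp_one_rpow, div_mul_cancel₀ _ (exp_pos q).ne',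
      ← rpow_add hq0, Real.sqrt_eq_rpow, ← rpow_mul hq0.le]
    ring_nf
  have hconst : 1 ≤ 2 * √(2 * exp 1) := by
    have : 1 ≤ √(2 * exp 1) := one_le_sqrt.mpr (by linarith [add_one_le_exp (1 : ℝ)])
    linarith
  rw [hprefactor]
  calc _ ≤ q ^ (-(q / 2)) * ((q / exp 1) ^ q * exp ((r + r : ℝ) * (exp 1 - 1))) := by
        gcongr; exact integral_abs_sub_rpow_prod_poissonMeasure_le r r hq0
    _ ≤ q ^ (-(q / 2)) * ((q / exp 1) ^ q * exp q) := by gcongr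
    _ = √q ^ q := hmain
    _ ≤ _ := by gcongr; exact le_mul_of_one_le_left (sqrt_nonneg q) hconst
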